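/- In a recollement situation with enough injectives, the functor sending A to (j*A, i^!Ker ε_A, i^!Ker ε_A → i^!j_!j*A) is an equivalence from the full subcategory Ker i* = {A ∈ A : i*A = 0} to the category M(i^!j_!) of triples (X, V, α) with α: V → i^!j_!X a monomorphism. -/

import Mathlib

open CategoryTheory Limits

universe v u v' u' v'' u''

/-- A recollement situation of abelian categories `A'`, `A`, `A''`. -/
structure Recollement (A' : Type u') (A : Type u) (A'' : Type u'')
    [Category.{v'} A'] [Category.{v} A] [Category.{v''} A'']
    [Abelian A'] [Abelian A] [Abelian A''] where
  /-- the functor `i^* : A → A'` -/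
  iStar : A ⥤ A'
  /-- the functor `i_* : A' → A` -/
  iLower : A' ⥤ A
  /-- the functor `i^! : A → A'` -/
  iShriek : A ⥤ A'
  /-- the functor `j_! : A'' → A` -/
  jShriek : A'' ⥤ A
  /-- the functor `j^* : A → A''` -/
  jStar : A ⥤ A''
  /-- the functor `j_* : A'' → A` -/
  jLower : A'' ⥤ A
  iStar_additive : iStar.Additive
  iLower_additive : iLower.Additive
  iShriek_additive : iShriek.Additive
  jShriek_additive : jShriek.Additive
  jStar_additive : jStar.Additive
  jLower_additive : jLower.Additive
  /-- `j_!` is left adjoint to `j^*` -/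
  adj₁ : jShriek ⊣ jStar
  /-- `j^*` is left adjoint to `j_*` -/
  adj₂ : jStar ⊣ jLower
  /-- `i^*` is left adjoint to `i_*` -/
  adj₃ : iStar ⊣ iLower
  /-- `i_*` is left adjoint to `i^!` -/
  adj₄ : iLower ⊣ iShriek
  /-- the unit `Id → j^* j_!` is an isomorphism -/
  isIso_adj₁_unit : IsIso adj₁.unit
  /-- the counit `j^* j_* → Id` is an isomorphism -/
  isIso_adj₂_counit : IsIso adj₂.counit
  /-- the counit `i^* i_* → Id` is an isomorphism -/
  isIso_adj₃_counit : IsIso adj₃.counit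
  /-- the unit `Id → i^! i_*` is an isomorphism -/
  isIso_adj₄_unit : IsIso adj₄.unit
  iLower_full : iLower.Full
  iLower_faithful : iLower.Faithful
  /-- `i_*` is an embedding onto the full subcategory of objects killed by `j^*` -/
  essImage_iLower : ∀ (X : A), iLower.essImage X ↔ IsZero (jStar.obj X)

attribute [instance] Recollement.iStar_additive Recollement.iLower_additive
  Recollement.iShriek_additive Recollement.jShriek_additive Recollement.jStar_additive
  Recollement.jLower_additive Recollement.isIso_adj₁_unit Recollement.isIso_adj₂_counit
  Recollement.isIso_adj₃_counit Recollement.isIso_adj₄_unit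
  Recollement.iLower_full Recollement.iLower_faithful

variable {A' : Type u'} {A : Type u} {A'' : Type u''}
    [Category.{v'} A'] [Category.{v} A] [Category.{v''} A'']
    [Abelian A'] [Abelian A] [Abelian A'']

namespace Recollement

/-- The norm `N : j_! ⟶ j_*`, whose component at `X` corresponds to the identity of `X`
under `Hom(j_!X, j_*X) ≅ Hom(X, j^*j_*X) ≅ Hom(X, X)`. -/
noncomputable def norm (R : Recollement A' A A'') : R.jShriek ⟶ R.jLower where
  app X := (R.adj₁.homEquiv X (R.jLower.obj X)).symm (inv (R.adj₂.counit.app X))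
  naturality {X Y} f := by
    have h : f ≫ inv (R.adj₂.counit.app Y) =
        inv (R.adj₂.counit.app X) ≫ R.jStar.map (R.jLower.map f) := by
      rw [← cancel_mono (R.adj₂.counit.app Y)]
      have := R.adj₂.counit.naturality f
      simp only [Functor.comp_map, Functor.id_map] at this
      simp [this]
    rw [← Adjunction.homEquiv_naturality_left_symm, h,
      Adjunction.homEquiv_naturality_right_symm]

/-- The intermediate extension `j_!* := Im (N : j_! → j_*)`. -/
noncomputable def jMid (R : Recollement A' A A'') : A'' ⥤ A where
  obj X := image (R.norm.app X)
  map {X Y} f := image.map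
    ((Arrow.homMk _ _ (R.norm.naturality f) :
      Arrow.mk (R.norm.app X) ⟶ Arrow.mk (R.norm.app Y)))
  map_id X := by
    have : (Arrow.homMk _ _ (R.norm.naturality (𝟙 X)) :
        Arrow.mk (R.norm.app X) ⟶ Arrow.mk (R.norm.app X)) = 𝟙 (Arrow.mk (R.norm.app X)) := by
      ext <;> simp
    rw [this, image.map_id]
    rfl
  map_comp {X Y Z} f g := by
    rw [← image.map_comp]
    congr 1
    ext <;> simp

end Recollement

namespace Recollement

/-- The functor from `Ker i^*` to the category of triples `(X, V, α : V → i^!j_! X)`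
(the comma category of `𝟭 A'` over `i^!j_!`), sending `A` to
`(j^*A, i^! Ker ε_A, i^!(Ker ε_A → j_!j^*A))` where `ε` is the counit of `(j_!, j^*)`. -/
noncomputable def kerIStarToComma (R : Recollement A' A A'') :
    ObjectProperty.FullSubcategory (fun X : A => IsZero (R.iStar.obj X)) ⥤
      Comma (𝟭 A') (R.jShriek ⋙ R.iShriek) where
  obj X :=
    { left := R.iShriek.obj (kernel (R.adj₁.counit.app X.obj))
      right := R.jStar.obj X.obj
      hom := R.iShriek.map (kernel.ι (R.adj₁.counit.app X.obj)) }
  map {X Y} m :=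
    { left := R.iShriek.map (kernel.map (R.adj₁.counit.app X.obj) (R.adj₁.counit.app Y.obj)
        (R.jShriek.map (R.jStar.map m.hom)) m.hom (by exact (R.adj₁.counit.naturality m.hom).symm))
      right := R.jStar.map m.hom
      w := by
        dsimp
        rw [← Functor.map_comp, ← Functor.map_comp]
        congr 1
        simp }
  map_id X := by
    apply CommaMorphism.ext
    · dsimp
      rw [← R.iShriek.map_id]
      congr 1
      ext
      simp
    · exact R.jStar.map_id X.obj
  map_comp {X Y Z} f g := by
    apply CommaMorphism.ext
    · dsimp
      rw [← Functor.map_comp]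
      congr 1
      ext
      simp
    · exact R.jStar.map_comp f.hom g.hom

end Recollement

/-!
The counit `ε_A : j_!j^*A → A` becomes an isomorphism under `j^*`, so its cokernel is killed by
`j^*`, and also by `i^*` when `i^*A = 0`; an object killed by both `j^*` and `i^*` (or `i^!`) is
zero, so `ε_A` is an epimorphism. Hence a morphism `A → B` in `Ker i^*` is determined by its image
under `j^*`, and a morphism `x : j^*A → j^*B` lifts to one iff `j_!x` maps `Ker ε_A` into
`Ker ε_B`. As `Ker ε_A` lies in the image of `i_*`, this is detected after applying `i^!`, which is
exactly the compatibility condition of a morphism of triples. Conversely, a triple `(X, V, α)` is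
realised by the cokernel of the monomorphism `i_*V → j_!X` adjoint to `α`.
-/

namespace CategoryTheory

variable {C D : Type*} [Category C] [Category D]

section

variable [HasZeroMorphisms C] [HasZeroMorphisms D]

lemma Functor.isZero_obj_kernel_of_mono_map (G : C ⥤ D) [G.PreservesZeroMorphisms]
    [G.PreservesMonomorphisms] {X Y : C} (f : X ⟶ Y) [HasKernel f] [Mono (G.map f)] :
    IsZero (G.obj (Limits.kernel f)) :=
  IsZero.of_mono_eq_zero (G.map (kernel.ι f)) <| by
    rw [← cancel_mono (G.map f), ← G.map_comp, kernel.condition, G.map_zero, zero_comp]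

lemma Functor.isZero_obj_cokernel_of_epi_map (G : C ⥤ D) [G.PreservesZeroMorphisms]
    [G.PreservesEpimorphisms] {X Y : C} (f : X ⟶ Y) [HasCokernel f] [Epi (G.map f)] :
    IsZero (G.obj (cokernel f)) :=
  IsZero.of_epi_eq_zero (G.map (cokernel.π f)) <| by
    rw [← cancel_epi (G.map f), ← G.map_comp, cokernel.condition, G.map_zero, comp_zero]

end

@[simps hom]
noncomputable def Abelian.isoKernelOfIsIsoComp [Abelian C] {K Y Y' : C} (m : K ⟶ Y) [Mono m]
    (e : Y ⟶ Y') [IsIso e] (g : Y' ⟶ cokernel m) (h : e ≫ g = cokernel.π m) : K ≅ kernel g where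
  hom := kernel.lift g (m ≫ e) (by rw [Category.assoc, h, cokernel.condition])
  inv := Abelian.monoLift m (kernel.ι g ≫ inv e) (by rw [← h]; simp)
  hom_inv_id := by rw [← cancel_mono m]; simp
  inv_hom_id := by ext; simp

lemma Comma.hom_ext_of_mono_hom {T : D ⥤ C} {P Q : Comma (𝟭 C) T} [Mono Q.hom] {f g : P ⟶ Q}
    (h : f.right = g.right) : f = g := by
  ext
  · rw [← cancel_mono Q.hom]
    have hf := f.w
    have hg := g.w
    simp only [Functor.id_map] at hf hg
    rw [hf, hg, h]
  · exact h

end CategoryTheory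

namespace Recollement

variable (R : Recollement A' A A'')

instance : R.jStar.IsRightAdjoint := R.adj₁.isRightAdjoint
instance : R.jStar.IsLeftAdjoint := R.adj₂.isLeftAdjoint
instance : R.iStar.IsLeftAdjoint := R.adj₃.isLeftAdjoint
instance : R.iLower.IsRightAdjoint := R.adj₃.isRightAdjoint
instance : R.iShriek.IsRightAdjoint := R.adj₄.isRightAdjoint

lemma isZero_jStar_iLower (W : A') : IsZero (R.jStar.obj (R.iLower.obj W)) :=
  (R.essImage_iLower _).mp (R.iLower.obj_mem_essImage W)

lemma isZero_of_isZero_jStar_of_isZero_iStar {K : A} (hj : IsZero (R.jStar.obj K))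
    (hi : IsZero (R.iStar.obj K)) : IsZero K := by
  obtain ⟨W, ⟨e⟩⟩ := (R.essImage_iLower K).mpr hj
  have hW : IsZero W := (hi.of_iso (R.iStar.mapIso e)).of_iso (asIso (R.adj₃.counit.app W)).symm
  exact (R.iLower.map_isZero hW).of_iso e.symm

lemma isZero_of_isZero_jStar_of_isZero_iShriek {K : A} (hj : IsZero (R.jStar.obj K))
    (hi : IsZero (R.iShriek.obj K)) : IsZero K := by
  obtain ⟨W, ⟨e⟩⟩ := (R.essImage_iLower K).mpr hj
  have hW : IsZero W := (hi.of_iso (R.iShriek.mapIso e)).of_iso (asIso (R.adj₄.unit.app W))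
  exact (R.iLower.map_isZero hW).of_iso e.symm

lemma hom_ext_of_isZero_jStar {K Z : A} (hK : IsZero (R.jStar.obj K)) {f g : K ⟶ Z}
    (h : R.iShriek.map f = R.iShriek.map g) : f = g := by
  obtain ⟨W, ⟨e⟩⟩ := (R.essImage_iLower K).mpr hK
  rw [← cancel_epi e.hom]
  apply (R.adj₄.homEquiv W Z).injective
  rw [Adjunction.homEquiv_naturality_right, Adjunction.homEquiv_naturality_right, h]

lemma isZero_iStar_jShriek (X : A'') : IsZero (R.iStar.obj (R.jShriek.obj X)) := by
  rw [IsZero.iff_id_eq_zero]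
  apply (R.adj₃.homEquiv _ _).injective
  apply (R.adj₁.homEquiv _ _).injective
  exact (R.isZero_jStar_iLower _).eq_of_tgt _ _

instance isIso_jStar_map_counit₁ (X : A) : IsIso (R.jStar.map (R.adj₁.counit.app X)) :=
  have : IsIso (R.adj₁.unit.app (R.jStar.obj X) ≫ R.jStar.map (R.adj₁.counit.app X)) := by
    rw [R.adj₁.right_triangle_components]
    exact IsIso.id _
  IsIso.of_isIso_comp_left (R.adj₁.unit.app (R.jStar.obj X)) _

instance isIso_iShriek_map_counit₄ (Y : A) : IsIso (R.iShriek.map (R.adj₄.counit.app Y)) :=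
  have : IsIso (R.adj₄.unit.app (R.iShriek.obj Y) ≫ R.iShriek.map (R.adj₄.counit.app Y)) := by
    rw [R.adj₄.right_triangle_components]
    exact IsIso.id _
  IsIso.of_isIso_comp_left (R.adj₄.unit.app (R.iShriek.obj Y)) _

instance mono_counit₄ (Y : A) : Mono (R.adj₄.counit.app Y) :=
  Preadditive.mono_of_isZero_kernel _ <| R.isZero_of_isZero_jStar_of_isZero_iShriek
    (IsZero.of_mono (R.jStar.map (kernel.ι _)) (R.isZero_jStar_iLower _))
    (R.iShriek.isZero_obj_kernel_of_mono_map _)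

lemma epi_counit₁ {X : A} (hX : IsZero (R.iStar.obj X)) : Epi (R.adj₁.counit.app X) :=
  Preadditive.epi_of_isZero_cokernel _ <| R.isZero_of_isZero_jStar_of_isZero_iStar
    (R.jStar.isZero_obj_cokernel_of_epi_map _)
    (IsZero.of_epi (R.iStar.map (cokernel.π _)) hX)

lemma jStar_map_eq_of_counit₁_comp {X Y : A} {f : X ⟶ Y} {g : R.jStar.obj X ⟶ R.jStar.obj Y}
    (h : R.adj₁.counit.app X ≫ f = R.jShriek.map g ≫ R.adj₁.counit.app Y) :
    R.jStar.map f = g := by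
  simpa [Adjunction.homEquiv_unit] using congrArg (R.adj₁.homEquiv _ _) h

instance mono_kerIStarToComma_obj_hom
    (X : ObjectProperty.FullSubcategory (fun X : A => IsZero (R.iStar.obj X))) :
    Mono (R.kerIStarToComma.obj X).hom :=
  R.iShriek.map_mono _

instance : R.kerIStarToComma.Faithful where
  map_injective {X Y} f g h := by
    have := R.epi_counit₁ X.property
    ext
    rw [← cancel_epi (R.adj₁.counit.app X.obj)]
    calc R.adj₁.counit.app X.obj ≫ f.hom
        = R.jShriek.map (R.jStar.map f.hom) ≫ R.adj₁.counit.app Y.obj :=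
          (R.adj₁.counit_naturality _).symm
      _ = R.jShriek.map (R.jStar.map g.hom) ≫ R.adj₁.counit.app Y.obj :=
          congrArg (fun m => R.jShriek.map m.right ≫ _) h
      _ = R.adj₁.counit.app X.obj ≫ g.hom := R.adj₁.counit_naturality _

lemma exists_jStar_map_eq {X Y : A} (hX : IsZero (R.iStar.obj X))
    (x : R.jStar.obj X ⟶ R.jStar.obj Y)
    (u : R.iShriek.obj (kernel (R.adj₁.counit.app X)) ⟶
      R.iShriek.obj (kernel (R.adj₁.counit.app Y)))
    (hu : u ≫ R.iShriek.map (kernel.ι (R.adj₁.counit.app Y)) =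
      R.iShriek.map (kernel.ι (R.adj₁.counit.app X)) ≫ R.iShriek.map (R.jShriek.map x)) :
    ∃ f : X ⟶ Y, R.jStar.map f = x := by
  have := R.epi_counit₁ hX
  have hzero : kernel.ι (R.adj₁.counit.app X) ≫ R.jShriek.map x ≫ R.adj₁.counit.app Y = 0 := by
    refine R.hom_ext_of_isZero_jStar (R.jStar.isZero_obj_kernel_of_mono_map _) ?_
    simp only [Functor.map_comp, Functor.map_zero]
    rw [← reassoc_of% hu, ← Functor.map_comp, kernel.condition, Functor.map_zero, comp_zero]
  exact ⟨_, R.jStar_map_eq_of_counit₁_comp (Abelian.comp_epiDesc _ _ hzero)⟩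

instance : R.kerIStarToComma.Full where
  map_surjective {X Y} m := by
    obtain ⟨f, hf⟩ := R.exists_jStar_map_eq X.property m.right m.left m.w
    exact ⟨ObjectProperty.homMk f, Comma.hom_ext_of_mono_hom hf⟩

instance isIso_jStar_map_cokernel_π {V : A'} {Y : A} (m : R.iLower.obj V ⟶ Y) [Mono m] :
    IsIso (R.jStar.map (cokernel.π m)) :=
  have : Mono (R.jStar.map (cokernel.π m)) := Preadditive.mono_of_isZero_kernel' _
    (KernelFork.isLimitMapConeEquiv _ R.jStar (Abelian.isLimitMapConeOfKernelForkOfι m R.jStar))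
    (R.isZero_jStar_iLower V)
  isIso_of_mono_of_epi _

section EssSurj

variable {V : A'} {X : A''} (α : V ⟶ R.iShriek.obj (R.jShriek.obj X))

instance mono_homEquiv_symm [Mono α] : Mono ((R.adj₄.homEquiv _ _).symm α) := by
  rw [Adjunction.homEquiv_counit]
  infer_instance

/-- The inverse of the equivalence on objects: `A` is glued from `j_! X` and `i_* V` along the
adjoint transpose `i_* V ↪ j_! X` of `α`. -/
noncomputable abbrev glue : A := cokernel ((R.adj₄.homEquiv _ _).symm α)

lemma isZero_iStar_glue : IsZero (R.iStar.obj (R.glue α)) :=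
  IsZero.of_epi (R.iStar.map (cokernel.π _)) (R.isZero_iStar_jShriek X)

noncomputable def glueUnit : X ⟶ R.jStar.obj (R.glue α) :=
  R.adj₁.homEquiv _ _ (cokernel.π _)

instance isIso_glueUnit [Mono α] : IsIso (R.glueUnit α) := by
  rw [glueUnit, Adjunction.homEquiv_unit]
  infer_instance

lemma jShriek_map_glueUnit_comp_counit₁ :
    R.jShriek.map (R.glueUnit α) ≫ R.adj₁.counit.app (R.glue α) = cokernel.π _ :=
  (R.adj₁.homEquiv_counit ..).symm.trans ((R.adj₁.homEquiv _ _).symm_apply_apply _)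

noncomputable def kerIStarToCommaObjGlueIso [Mono α] :
    R.kerIStarToComma.obj ⟨R.glue α, R.isZero_iStar_glue α⟩ ≅
      ({ left := V, right := X, hom := α } : Comma (𝟭 A') (R.jShriek ⋙ R.iShriek)) :=
  let φ := Abelian.isoKernelOfIsIsoComp _ _ _ (R.jShriek_map_glueUnit_comp_counit₁ α)
  (Comma.isoMk (asIso (R.adj₄.unit.app V) ≪≫ R.iShriek.mapIso φ)
    (asIso (R.glueUnit α) : X ≅ R.jStar.obj (R.glue α)) (by
    dsimp [kerIStarToComma]
    rw [Category.assoc, ← Functor.map_comp, Abelian.isoKernelOfIsIsoComp_hom, kernel.lift_ι,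
      Functor.map_comp, ← Category.assoc, ← Adjunction.homEquiv_unit, Equiv.apply_symm_apply])).symm

instance : (ObjectProperty.lift (fun o : Comma (𝟭 A') (R.jShriek ⋙ R.iShriek) => Mono o.hom)
    R.kerIStarToComma R.mono_kerIStarToComma_obj_hom).EssSurj where
  mem_essImage o :=
    have : Mono o.obj.hom := o.property
    ⟨_, ⟨(ObjectProperty.ι _).preimageIso (R.kerIStarToCommaObjGlueIso o.obj.hom)⟩⟩

end EssSurj

end Recollement

theorem recollement_kerIStar_equivalence_general (R : Recollement A' A A'') :
    ∃ h : ∀ X, Mono ((R.kerIStarToComma).obj X).hom,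
      (ObjectProperty.lift (fun o : Comma (𝟭 A') (R.jShriek ⋙ R.iShriek) => Mono o.hom)
        R.kerIStarToComma h).IsEquivalence :=
  ⟨R.mono_kerIStarToComma_obj_hom, { }⟩

/-- With enough injectives, `A ↦ (j^*A, i^! Ker ε_A, i^! Ker ε_A → i^!j_!j^*A)` is an
equivalence from `Ker i^*` to the category `M(i^!j_!)` of triples
`(X, V, α : V ↪ i^!j_!X)` with `α` a monomorphism. -/
theorem recollement_kerIStar_equivalence (R : Recollement A' A A'')
    [EnoughInjectives A] :
    ∃ h : ∀ X, Mono ((R.kerIStarToComma).obj X).hom,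
      (ObjectProperty.lift (fun o : Comma (𝟭 A') (R.jShriek ⋙ R.iShriek) => Mono o.hom)
        R.kerIStarToComma h).IsEquivalence :=
  recollement_kerIStar_equivalence_general R
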